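/- arXiv:math/0511001 — 2 statements merged into one kernel-verified Lean document; each statement's English description precedes it below -/
import Mathlib

section
/- Let θ > 0 be irrational with all continued fraction elements a_k ≥ 3, and let p_n/q_n be its convergents. Set T_n = log((p_n θ + q_n)/|q_n θ - p_n|) and l_t(q,p)² = (1/(1+θ²))·((q+θp)²e^{-t} + e^t(p-θq)²). Then for every k ≠ n, l_{T_n}(q_k, p_k)² > l_{T_n}(q_n, p_n)², i.e. the (q_n, p_n)-vector is strictly the shortest among all convergent vectors at time T_n. -/
/-- Data of the continued fraction expansion of `θ`: elements `a`, complete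
quotients `x`, and convergents `p n / q n` given by the standard recursions. -/
structure CFData (θ : ℝ) where
  a : ℕ → ℤ
  x : ℕ → ℝ
  p : ℕ → ℤ
  q : ℕ → ℤ
  x_zero : x 0 = θ
  a_floor : ∀ n, a n = ⌊x n⌋
  x_succ : ∀ n, x (n + 1) = 1 / (x n - a n)
  p_zero : p 0 = a 0
  q_zero : q 0 = 1
  p_one : p 1 = a 1 * a 0 + 1
  q_one : q 1 = a 1
  p_rec : ∀ n, p (n + 2) = a (n + 2) * p (n + 1) + p n
  q_rec : ∀ n, q (n + 2) = a (n + 2) * q (n + 1) + q n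

/-!
Write `α_n = q_n + θ p_n` and `δ_n = p_n - θ q_n`. At time `T_n = log (α_n / |δ_n|)` the two
terms of `l_{T_n}(q_n, p_n)²` are balanced, both equal to `α_n |δ_n| / (1 + θ²)`, while
`l_{T_n}(q_k, p_k)² = (α_k² / α_n² + δ_k² / δ_n²) · α_n |δ_n| / (1 + θ²)`. Since every complete
quotient exceeds `3`, we have `δ_{n+1} = -δ_n / x_{n+2}` and `α_{n+1} ≥ 3 α_n`, so one of the two
ratios is at least `9` as soon as `k ≠ n`.
-/

open Real

theorem sq_mul_exp_neg_log_add_lt {u v u' v' : ℝ} (hu : 0 < u) (hv : v ≠ 0)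
    (h : 2 * u ^ 2 < u' ^ 2 ∨ 2 * v ^ 2 < v' ^ 2) :
    u ^ 2 * exp (-log (u / |v|)) + exp (log (u / |v|)) * v ^ 2 <
      u' ^ 2 * exp (-log (u / |v|)) + exp (log (u / |v|)) * v' ^ 2 := by
  set s := u / |v| with hs_def
  have hs : 0 < s := div_pos hu (abs_pos.2 hv)
  rw [exp_neg, exp_log hs]
  have hbalanced : s * v ^ 2 = u ^ 2 * s⁻¹ := by
    rw [hs_def, ← sq_abs v]
    field_simp
  rcases h with hu' | hv'
  · have := mul_lt_mul_of_pos_right hu' (inv_pos.2 hs)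
    have : 0 ≤ s * v' ^ 2 := by positivity
    linarith
  · have := mul_lt_mul_of_pos_left hv' hs
    have : 0 ≤ u' ^ 2 * s⁻¹ := by positivity
    linarith

theorem pos_and_three_mul_le_succ_of_rec {u a : ℕ → ℝ} (ha : ∀ n, 3 ≤ a n) (h0 : 0 < u 0)
    (h1 : 3 * u 0 ≤ u 1) (hrec : ∀ n, u (n + 2) = a (n + 2) * u (n + 1) + u n) :
    ∀ n, 0 < u n ∧ 3 * u n ≤ u (n + 1)
  | 0 => ⟨h0, h1⟩
  | n + 1 => by
    obtain ⟨hn, hstep⟩ := pos_and_three_mul_le_succ_of_rec ha h0 h1 hrec n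
    refine ⟨by linarith, ?_⟩
    rw [hrec]
    nlinarith [ha (n + 2)]

namespace CFData

variable {θ : ℝ} (c : CFData θ)

theorem irrational_x (hirr : Irrational θ) (n : ℕ) : Irrational (c.x n) := by
  induction n with
  | zero => rwa [c.x_zero]
  | succ n ih =>
    rw [c.x_succ, one_div]
    exact (ih.sub_intCast _).inv

theorem three_lt_x (hirr : Irrational θ) (ha : ∀ k, 3 ≤ c.a k) (n : ℕ) : 3 < c.x n := by
  have h3 : ((3 : ℤ) : ℝ) ≤ c.x n :=
    (Int.cast_le.2 (ha n)).trans (c.a_floor n ▸ Int.floor_le (c.x n))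
  exact h3.lt_of_ne ((c.irrational_x hirr n).ne_int 3).symm

theorem x_sub_a_eq_inv (n : ℕ) : c.x n - c.a n = (c.x (n + 1))⁻¹ := by
  rw [c.x_succ, one_div, inv_inv]

theorem p_sub_mul_q_zero : (c.p 0 : ℝ) - θ * c.q 0 = -(c.x 1)⁻¹ := by
  rw [← c.x_sub_a_eq_inv, c.p_zero, c.q_zero, c.x_zero]
  push_cast
  ring

theorem p_sub_mul_q_succ (hirr : Irrational θ) (n : ℕ) :
    (c.p (n + 1) : ℝ) - θ * c.q (n + 1) = -(c.x (n + 2))⁻¹ * (c.p n - θ * c.q n) := by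
  induction n with
  | zero =>
    have hx1 : c.x 1 ≠ 0 := (c.irrational_x hirr 1).ne_zero
    have hθ : θ = c.a 0 + (c.x 1)⁻¹ := by rw [← c.x_sub_a_eq_inv, c.x_zero]; ring
    have ha1 : (c.a 1 : ℝ) = c.x 1 - (c.x 2)⁻¹ := by rw [← c.x_sub_a_eq_inv]; ring
    rw [p_sub_mul_q_zero, c.p_one, c.q_one]
    push_cast
    linear_combination (-(c.a 1 : ℝ)) * hθ - (c.x 1)⁻¹ * ha1 - mul_inv_cancel₀ hx1
  | succ n ih =>
    have hx : c.x (n + 2) ≠ 0 := (c.irrational_x hirr (n + 2)).ne_zero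
    have hrec : (c.p (n + 2) : ℝ) - θ * c.q (n + 2) =
        c.a (n + 2) * (c.p (n + 1) - θ * c.q (n + 1)) + (c.p n - θ * c.q n) := by
      rw [c.p_rec, c.q_rec]
      push_cast
      ring
    rw [hrec, ih, show (c.x (n + 1 + 2))⁻¹ = c.x (n + 2) - c.a (n + 2) from
      (c.x_sub_a_eq_inv _).symm]
    field_simp
    ring

theorem p_sub_mul_q_ne_zero (hirr : Irrational θ) (n : ℕ) : (c.p n : ℝ) - θ * c.q n ≠ 0 := by
  induction n with
  | zero =>
    rw [p_sub_mul_q_zero]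
    exact neg_ne_zero.2 (inv_ne_zero (c.irrational_x hirr 1).ne_zero)
  | succ n ih =>
    rw [c.p_sub_mul_q_succ hirr]
    exact mul_ne_zero (neg_ne_zero.2 (inv_ne_zero (c.irrational_x hirr (n + 2)).ne_zero)) ih

theorem three_mul_abs_p_sub_mul_q_succ_le (hirr : Irrational θ) (ha : ∀ k, 3 ≤ c.a k) (n : ℕ) :
    3 * |(c.p (n + 1) : ℝ) - θ * c.q (n + 1)| ≤ |(c.p n : ℝ) - θ * c.q n| := by
  have hx := c.three_lt_x hirr ha (n + 2)
  rw [c.p_sub_mul_q_succ hirr, abs_mul, abs_neg, abs_inv, abs_of_pos (by linarith), ← mul_assoc]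
  refine mul_le_of_le_one_left (abs_nonneg _) ?_
  rw [← div_eq_mul_inv, div_le_one (by linarith)]
  exact hx.le

theorem three_mul_abs_p_sub_mul_q_le_of_lt (hirr : Irrational θ) (ha : ∀ k, 3 ≤ c.a k)
    {k n : ℕ} (hkn : k < n) :
    3 * |(c.p n : ℝ) - θ * c.q n| ≤ |(c.p k : ℝ) - θ * c.q k| := by
  have hanti : Antitone fun n ↦ |(c.p n : ℝ) - θ * c.q n| := antitone_nat_of_succ_le fun n ↦ by
    linarith [c.three_mul_abs_p_sub_mul_q_succ_le hirr ha n,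
      abs_nonneg ((c.p (n + 1) : ℝ) - θ * c.q (n + 1))]
  linarith [hanti hkn, c.three_mul_abs_p_sub_mul_q_succ_le hirr ha k]

theorem q_add_mul_p_pos_and_three_mul_le_succ (hirr : Irrational θ) (ha : ∀ k, 3 ≤ c.a k) :
    ∀ n, 0 < (c.q n : ℝ) + θ * c.p n ∧
      3 * ((c.q n : ℝ) + θ * c.p n) ≤ (c.q (n + 1) : ℝ) + θ * c.p (n + 1) := by
  have hθ : 3 < θ := c.x_zero ▸ c.three_lt_x hirr ha 0
  have ha' (n : ℕ) : (3 : ℝ) ≤ c.a n := by exact_mod_cast ha n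
  refine pos_and_three_mul_le_succ_of_rec ha' ?_ ?_ fun n ↦ ?_
  · rw [c.q_zero, c.p_zero]
    push_cast
    nlinarith [ha' 0]
  · rw [c.q_zero, c.p_zero, c.q_one, c.p_one]
    push_cast
    nlinarith [mul_nonneg (sub_nonneg.2 (ha' 1)) (by nlinarith [ha' 0] : (0 : ℝ) ≤ 1 + θ * c.a 0)]
  · rw [c.q_rec, c.p_rec]
    push_cast
    ring

theorem three_mul_q_add_mul_p_le_of_lt (hirr : Irrational θ) (ha : ∀ k, 3 ≤ c.a k)
    {n k : ℕ} (hnk : n < k) :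
    3 * ((c.q n : ℝ) + θ * c.p n) ≤ (c.q k : ℝ) + θ * c.p k := by
  have hstep := c.q_add_mul_p_pos_and_three_mul_le_succ hirr ha
  have hmono : Monotone fun n ↦ (c.q n : ℝ) + θ * c.p n := monotone_nat_of_le_succ fun n ↦ by
    linarith [hstep n]
  linarith [hmono (Nat.succ_le_of_lt hnk), (hstep n).2]

end CFData

theorem stmt_9_general (θ : ℝ) (hirr : Irrational θ) (c : CFData θ)
    (ha : ∀ k, 3 ≤ c.a k) (n k : ℕ) (hk : k ≠ n) :
    (1 / (1 + θ ^ 2)) *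
        (((c.q n : ℝ) + θ * c.p n) ^ 2 *
            Real.exp (-(Real.log (((c.p n : ℝ) * θ + c.q n) / |(c.q n : ℝ) * θ - c.p n|))) +
          Real.exp (Real.log (((c.p n : ℝ) * θ + c.q n) / |(c.q n : ℝ) * θ - c.p n|)) *
            ((c.p n : ℝ) - θ * c.q n) ^ 2) <
      (1 / (1 + θ ^ 2)) *
        (((c.q k : ℝ) + θ * c.p k) ^ 2 *
            Real.exp (-(Real.log (((c.p n : ℝ) * θ + c.q n) / |(c.q n : ℝ) * θ - c.p n|))) +
          Real.exp (Real.log (((c.p n : ℝ) * θ + c.q n) / |(c.q n : ℝ) * θ - c.p n|)) *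
            ((c.p k : ℝ) - θ * c.q k) ^ 2) := by
  have hα : (c.p n : ℝ) * θ + c.q n = c.q n + θ * c.p n := by ring
  have hδ : |(c.q n : ℝ) * θ - c.p n| = |(c.p n : ℝ) - θ * c.q n| := by
    rw [abs_sub_comm, mul_comm]
  rw [hα, hδ]
  refine mul_lt_mul_of_pos_left ?_ (by positivity)
  have hαn := (c.q_add_mul_p_pos_and_three_mul_le_succ hirr ha n).1
  have hδn := c.p_sub_mul_q_ne_zero hirr n
  refine sq_mul_exp_neg_log_add_lt hαn hδn ?_
  rcases hk.lt_or_gt with hkn | hnk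
  · have h := c.three_mul_abs_p_sub_mul_q_le_of_lt hirr ha hkn
    right
    nlinarith [sq_abs ((c.p n : ℝ) - θ * c.q n), sq_abs ((c.p k : ℝ) - θ * c.q k),
      abs_pos.2 hδn]
  · have h := c.three_mul_q_add_mul_p_le_of_lt hirr ha hnk
    left
    nlinarith

theorem stmt_9 (θ : ℝ) (hθ : 0 < θ) (hirr : Irrational θ) (c : CFData θ)
    (ha : ∀ k, 3 ≤ c.a k) (n k : ℕ) (hk : k ≠ n) :
    (1 / (1 + θ ^ 2)) *
        (((c.q n : ℝ) + θ * c.p n) ^ 2 *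
            Real.exp (-(Real.log (((c.p n : ℝ) * θ + c.q n) / |(c.q n : ℝ) * θ - c.p n|))) +
          Real.exp (Real.log (((c.p n : ℝ) * θ + c.q n) / |(c.q n : ℝ) * θ - c.p n|)) *
            ((c.p n : ℝ) - θ * c.q n) ^ 2) <
      (1 / (1 + θ ^ 2)) *
        (((c.q k : ℝ) + θ * c.p k) ^ 2 *
            Real.exp (-(Real.log (((c.p n : ℝ) * θ + c.q n) / |(c.q n : ℝ) * θ - c.p n|))) +
          Real.exp (Real.log (((c.p n : ℝ) * θ + c.q n) / |(c.q n : ℝ) * θ - c.p n|)) *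
            ((c.p k : ℝ) - θ * c.q k) ^ 2) :=
  stmt_9_general θ hirr c ha n k hk
end

section
/- Let θ > 0 irrational with convergents p_n/q_n and elements a_k ≥ 3. For k < n, at time T_n = log((p_n θ + q_n)/|q_n θ - p_n|), one has (q_k θ - p_k)²·e^{T_n}/(1+θ²) > 4(p_n θ + q_n)|q_n θ - p_n|/(1+θ²). -/
namespace CFData

variable {θ : ℝ} (c : CFData θ)

def err (m : ℕ) : ℝ := c.q m * θ - c.p m

theorem one_div_x_succ (m : ℕ) : 1 / c.x (m + 1) = c.x m - c.a m := by
  rw [c.x_succ, one_div_one_div]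

theorem a_le_x (m : ℕ) : (c.a m : ℝ) ≤ c.x m := by
  rw [c.a_floor]
  exact Int.floor_le _

theorem err_zero : c.err 0 = 1 / c.x 1 := by
  rw [c.one_div_x_succ, err, c.p_zero, c.q_zero, c.x_zero]
  push_cast
  ring

theorem err_succ (hx : ∀ m, c.x m ≠ 0) (m : ℕ) :
    c.err (m + 1) = -c.err m / c.x (m + 2) := by
  induction m with
  | zero =>
    have herr_one : c.err 1 = c.a 1 * c.err 0 - 1 := by
      simp only [err, c.p_one, c.q_one, c.q_zero, c.p_zero]
      push_cast
      ring
    rw [herr_one, div_eq_mul_one_div _ (c.x 2), c.one_div_x_succ, c.err_zero]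
    field_simp [hx 1]
    ring
  | succ m ih =>
    have herr : c.err m = -c.x (m + 2) * c.err (m + 1) := by
      rw [ih]
      field_simp [hx (m + 2)]
    have hrec : c.err (m + 2) = c.a (m + 2) * c.err (m + 1) + c.err m := by
      simp only [err, c.p_rec, c.q_rec]
      push_cast
      ring
    rw [hrec, herr, div_eq_mul_one_div _ (c.x (m + 3)), c.one_div_x_succ]
    ring

theorem err_ne_zero (hx : ∀ m, c.x m ≠ 0) (m : ℕ) : c.err m ≠ 0 := by
  induction m with
  | zero =>
    rw [c.err_zero]
    exact one_div_ne_zero (hx 1)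
  | succ m ih =>
    rw [c.err_succ hx]
    exact div_ne_zero (neg_ne_zero.2 ih) (hx (m + 2))

theorem p_pos_q_pos (ha : ∀ k, 0 < c.a k) (m : ℕ) : 0 < c.p m ∧ 0 < c.q m := by
  induction m using Nat.twoStepInduction with
  | zero => exact ⟨c.p_zero ▸ ha 0, c.q_zero ▸ one_pos⟩
  | one =>
    rw [c.p_one, c.q_one]
    exact ⟨by nlinarith [ha 0, ha 1], ha 1⟩
  | more m h₀ h₁ =>
    rw [c.p_rec, c.q_rec]
    constructor <;> nlinarith [ha (m + 2)]

theorem three_le_x (ha : ∀ k, 3 ≤ c.a k) (m : ℕ) : 3 ≤ c.x m :=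
  le_trans (by exact_mod_cast ha m) (c.a_le_x m)

theorem x_ne_zero (ha : ∀ k, 3 ≤ c.a k) (m : ℕ) : c.x m ≠ 0 :=
  (lt_of_lt_of_le three_pos (c.three_le_x ha m)).ne'

theorem abs_err_succ_le (ha : ∀ k, 3 ≤ c.a k) (m : ℕ) : |c.err (m + 1)| ≤ |c.err m| / 3 := by
  have hx := c.three_le_x ha (m + 2)
  rw [c.err_succ (c.x_ne_zero ha), abs_div, abs_neg,
    abs_of_pos (a := c.x (m + 2)) (by linarith)]
  exact div_le_div_of_nonneg_left (abs_nonneg _) (by norm_num) hx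

theorem three_mul_abs_err_le (ha : ∀ k, 3 ≤ c.a k) {k n : ℕ} (hkn : k < n) :
    3 * |c.err n| ≤ |c.err k| := by
  induction n, hkn using Nat.le_induction with
  | base => linarith [c.abs_err_succ_le ha k]
  | succ n _ ih => linarith [c.abs_err_succ_le ha n, abs_nonneg (c.err n)]

end CFData

theorem stmt_10_general (θ : ℝ) (c : CFData θ)
    (ha : ∀ k, 3 ≤ c.a k) (n k : ℕ) (hkn : k < n) :
    ((c.q k : ℝ) * θ - c.p k) ^ 2 *
        Real.exp (Real.log (((c.p n : ℝ) * θ + c.q n) / |(c.q n : ℝ) * θ - c.p n|)) /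
        (1 + θ ^ 2) >
      4 * ((c.p n : ℝ) * θ + c.q n) * |(c.q n : ℝ) * θ - c.p n| / (1 + θ ^ 2) := by
  change c.err k ^ 2 * Real.exp (Real.log (_ / |c.err n|)) / _ > 4 * _ * |c.err n| / _
  have hB : 0 < (c.p n : ℝ) * θ + c.q n := by
    obtain ⟨hp, hq⟩ := c.p_pos_q_pos (fun k ↦ by linarith [ha k]) n
    have hp' : (0 : ℝ) < c.p n := by exact_mod_cast hp
    have hq' : (0 : ℝ) < c.q n := by exact_mod_cast hq
    have hθ : 3 ≤ θ := c.x_zero ▸ c.three_le_x ha 0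
    positivity
  have hn : 0 < |c.err n| := abs_pos.2 (c.err_ne_zero (c.x_ne_zero ha) n)
  have hk : 3 * |c.err n| ≤ |c.err k| := c.three_mul_abs_err_le ha hkn
  rw [Real.exp_log (div_pos hB hn), ← sq_abs (c.err k), mul_div_assoc']
  gcongr
  have hsq : 4 * |c.err n| ^ 2 < |c.err k| ^ 2 := by nlinarith
  rw [lt_div_iff₀ hn]
  linarith [mul_lt_mul_of_pos_right hsq hB]

theorem stmt_10 (θ : ℝ) (hθ : 0 < θ) (hirr : Irrational θ) (c : CFData θ)
    (ha : ∀ k, 3 ≤ c.a k) (n k : ℕ) (hkn : k < n) :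
    ((c.q k : ℝ) * θ - c.p k) ^ 2 *
        Real.exp (Real.log (((c.p n : ℝ) * θ + c.q n) / |(c.q n : ℝ) * θ - c.p n|)) /
        (1 + θ ^ 2) >
      4 * ((c.p n : ℝ) * θ + c.q n) * |(c.q n : ℝ) * θ - c.p n| / (1 + θ ^ 2) :=
  stmt_10_general θ c ha n k hkn
end
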